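/- arXiv:1406.3361 — 6 statements merged into one kernel-verified Lean document; each statement's English description precedes it below -/
import Mathlib

section
/- Let p ≥ 2, let (U,D) ∈ SO(p)×Diag⁺(p), and let X = U D Uᵀ ∈ Sym⁺(p). A pair (U*,D*) ∈ SO(p)×Diag⁺(p) satisfies U* D* U*ᵀ = X if and only if there exist a permutation π of {1,…,p} and a matrix R ∈ G_D such that U* = U R P_πᵀ and D* = D_π. -/
open Matrix

/-- `p × p` real matrices. -/
abbrev Mat (p : ℕ) := Matrix (Fin p) (Fin p) ℝ

/-- `U ∈ SO(p)`: a rotation matrix. -/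
def IsSO {p : ℕ} (U : Mat p) : Prop := U * Uᵀ = 1 ∧ U.det = 1

/-- `D ∈ Diag⁺(p)`: diagonal with positive diagonal entries. -/
def IsDiagPos {p : ℕ} (D : Mat p) : Prop := D.IsDiag ∧ ∀ i, 0 < D i i

/-- Antisymmetric matrix. -/
def IsAntisym {p : ℕ} (A : Mat p) : Prop := Aᵀ = -A

/-- The permutation matrix `P⁰_π`: in column `j`, the entry `π j` equals 1. -/
def P0 {p : ℕ} (π : Equiv.Perm (Fin p)) : Mat p :=
  Matrix.of fun i j => if i = π j then (1 : ℝ) else 0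

/-- `diag(−1,1,…,1)`. -/
def flipMat (p : ℕ) : Mat p :=
  Matrix.diagonal fun i => if (i : ℕ) = 0 then (-1 : ℝ) else 1

open scoped Classical in
/-- `P_π`: the determinant-one modification of `P⁰_π`. -/
noncomputable def Pmat {p : ℕ} (π : Equiv.Perm (Fin p)) : Mat p :=
  if (P0 π).det = 1 then P0 π else flipMat p * P0 π

/-- `D_π := P_π D P_πᵀ`. -/
noncomputable def permDiag {p : ℕ} (π : Equiv.Perm (Fin p)) (D : Mat p) : Mat p :=
  Pmat π * D * (Pmat π)ᵀ

/-- The stabilizer group `G_D = {R ∈ SO(p) : R D Rᵀ = D}`. -/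
def GD {p : ℕ} (D : Mat p) : Set (Mat p) := {R | IsSO R ∧ R * D * Rᵀ = D}

/-- Squared Frobenius norm. -/
noncomputable def frobSq {p : ℕ} (A : Mat p) : ℝ := ∑ i, ∑ j, (A i j) ^ 2

/-- `d_SO(U,V)²`: the minimal value of `‖A‖_F²/2` over antisymmetric `A` with `exp A = V Uᵀ`. -/
noncomputable def dSOsq {p : ℕ} (U V : Mat p) : ℝ :=
  sInf {x | ∃ A : Mat p, IsAntisym A ∧ NormedSpace.exp A = V * Uᵀ ∧ x = frobSq A / 2}

/-- `d_𝒟(D,Λ)²`. -/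
noncomputable def dDsq {p : ℕ} (D Λ : Mat p) : ℝ :=
  ∑ i, (Real.log (Λ i i) - Real.log (D i i)) ^ 2

/-- The geodesic distance on `SO(p) × Diag⁺(p)` (with weight `k`). -/
noncomputable def gdist {p : ℕ} (k : ℝ) (a b : Mat p × Mat p) : ℝ :=
  Real.sqrt (k * dSOsq a.1 b.1 + dDsq a.2 b.2)

/-- `𝓔_X`: the set of versions (eigen-decompositions) of `X`. -/
def Versions {p : ℕ} (X : Mat p) : Set (Mat p × Mat p) :=
  {a | IsSO a.1 ∧ IsDiagPos a.2 ∧ a.1 * a.2 * a.1ᵀ = X}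

/-- The scaling–rotation distance on `Sym⁺(p)`. -/
noncomputable def dSR {p : ℕ} (k : ℝ) (X Y : Mat p) : ℝ :=
  sInf {x | ∃ a ∈ Versions X, ∃ b ∈ Versions Y, x = gdist k a b}

/-! If `U* D* U*ᵀ = U D Uᵀ`, then `M = Uᵀ U*` is a rotation with `M D* Mᵀ = D`. Conjugation by an
orthogonal matrix preserves the characteristic polynomial, so the diagonals of `D` and `D*` agree
as multisets and `D* = D_π` for some permutation `π`. Then `R = M P_π` lies in `G_D` and
`U R P_πᵀ = U M = U*`; the converse is a direct computation with `P_πᵀ P_π = 1`. -/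

theorem Multiset.exists_equiv_of_map_univ_val_eq {α ι κ : Type*} [Fintype ι] [Fintype κ]
    [DecidableEq α] {f : ι → α} {g : κ → α}
    (h : Finset.univ.val.map f = Finset.univ.val.map g) : ∃ e : ι ≃ κ, ∀ i, g (e i) = f i := by
  have hfiber : ∀ c, Fintype.card {i // f i = c} = Fintype.card {k // g k = c} := fun c => by
    have hcount := congrArg (Multiset.count c) h
    rw [Multiset.count_map, Multiset.count_map] at hcount
    simp only [Fintype.card_subtype]
    convert hcount using 2 <;> simp [Finset.card, Finset.filter_val, eq_comm]
  exact ⟨Equiv.ofFiberEquiv fun c => Fintype.equivOfCardEq (hfiber c),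
    Equiv.ofFiberEquiv_map _⟩

section Conjugation

variable {n R : Type*} [Fintype n]

theorem Matrix.charpoly_mul_mul_of_mul_eq_one [DecidableEq n] [CommRing R]
    {M N : Matrix n n R} (h : N * M = 1) (A : Matrix n n R) :
    (M * A * N).charpoly = A.charpoly := by
  rw [Matrix.mul_assoc, charpoly_mul_comm, Matrix.mul_assoc, h, Matrix.mul_one]

theorem Matrix.roots_charpoly_diagonal [DecidableEq n] [CommRing R] [IsDomain R] (d : n → R) :
    (diagonal d).charpoly.roots = Finset.univ.val.map d := by
  rw [charpoly_diagonal, Polynomial.roots_prod _ _ (Finset.prod_ne_zero_iff.mpr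
    fun i _ => Polynomial.X_sub_C_ne_zero (d i))]
  simp

theorem Matrix.mul_mul_transpose_mul [CommSemiring R] (A B X : Matrix n n R) :
    A * B * X * (A * B)ᵀ = A * (B * X * Bᵀ) * Aᵀ := by
  simp only [transpose_mul, Matrix.mul_assoc]

theorem Matrix.transpose_mul_mul_transpose_mul [DecidableEq n] [CommSemiring R] {Q : Matrix n n R}
    (hQ : Qᵀ * Q = 1) (X : Matrix n n R) : Qᵀ * (Q * X * Qᵀ) * Qᵀᵀ = X := by
  simp only [transpose_transpose, Matrix.mul_assoc, ← Matrix.mul_assoc Qᵀ Q, hQ,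
    Matrix.one_mul, Matrix.mul_one]

end Conjugation

section Rotations

variable {p : ℕ}

theorem IsSO.transpose_mul_self {U : Mat p} (hU : IsSO U) : Uᵀ * U = 1 :=
  mul_eq_one_comm.mp hU.1

theorem IsSO.transpose {U : Mat p} (hU : IsSO U) : IsSO Uᵀ :=
  ⟨by rw [transpose_transpose, hU.transpose_mul_self], by rw [det_transpose, hU.2]⟩

theorem IsSO.mul {U V : Mat p} (hU : IsSO U) (hV : IsSO V) : IsSO (U * V) :=
  ⟨by rw [transpose_mul, Matrix.mul_assoc, ← Matrix.mul_assoc V, hV.1, Matrix.one_mul, hU.1],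
    by rw [det_mul, hU.2, hV.2, mul_one]⟩

theorem P0_eq_permMatrix (π : Equiv.Perm (Fin p)) : P0 π = (π⁻¹).permMatrix ℝ := by
  ext i j
  simp only [P0, of_apply, PEquiv.toMatrix_apply, Equiv.toPEquiv_apply, Option.mem_def,
    Option.some.injEq, Equiv.Perm.inv_def, Equiv.symm_apply_eq]

theorem P0_mul_transpose (π : Equiv.Perm (Fin p)) : P0 π * (P0 π)ᵀ = 1 := by
  rw [P0_eq_permMatrix, transpose_permMatrix, ← permMatrix_mul, inv_inv, mul_inv_cancel,
    permMatrix_one]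

theorem det_P0 (π : Equiv.Perm (Fin p)) : (P0 π).det = Equiv.Perm.sign π := by
  simp [P0_eq_permMatrix]

theorem P0_mul_diagonal_mul_transpose (π : Equiv.Perm (Fin p)) (d : Fin p → ℝ) :
    P0 π * diagonal d * (P0 π)ᵀ = diagonal fun i => d (π⁻¹ i) := by
  rw [P0_eq_permMatrix, transpose_permMatrix, PEquiv.toMatrix_toPEquiv_mul,
    PEquiv.mul_toMatrix_toPEquiv, submatrix_submatrix, inv_inv]
  exact submatrix_diagonal_equiv d π⁻¹

theorem flipMat_mul_transpose : flipMat p * (flipMat p)ᵀ = 1 := by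
  rw [flipMat, diagonal_transpose, diagonal_mul_diagonal, ← diagonal_one]
  congr 1
  ext i
  split_ifs <;> norm_num

theorem det_flipMat (hp : 0 < p) : (flipMat p).det = -1 := by
  rw [flipMat, det_diagonal, Finset.prod_eq_single ⟨0, hp⟩ (fun i _ hi => if_neg
    fun h => hi (Fin.ext h)) (by simp)]
  simp

theorem flipMat_mul_diagonal_mul_transpose (d : Fin p → ℝ) :
    flipMat p * diagonal d * (flipMat p)ᵀ = diagonal d := by
  rw [flipMat, diagonal_transpose, diagonal_mul_diagonal, diagonal_mul_diagonal]
  congr 1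
  ext i
  split_ifs <;> ring

theorem Pmat_mul_transpose (π : Equiv.Perm (Fin p)) : Pmat π * (Pmat π)ᵀ = 1 := by
  unfold Pmat
  split_ifs
  · exact P0_mul_transpose π
  · rw [transpose_mul, Matrix.mul_assoc, ← Matrix.mul_assoc (P0 π), P0_mul_transpose,
      Matrix.one_mul, flipMat_mul_transpose]

theorem det_Pmat (π : Equiv.Perm (Fin p)) : (Pmat π).det = 1 := by
  unfold Pmat
  split_ifs with h
  · exact h
  · have hp : 0 < p := Nat.pos_of_ne_zero fun hp => h (by subst hp; exact det_isEmpty)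
    have hsign : Equiv.Perm.sign π = -1 :=
      (Int.units_eq_one_or _).resolve_left fun hs => h (by rw [det_P0, hs]; simp)
    rw [det_mul, det_flipMat hp, det_P0, hsign]
    norm_num

theorem isSO_Pmat (π : Equiv.Perm (Fin p)) : IsSO (Pmat π) := ⟨Pmat_mul_transpose π, det_Pmat π⟩

theorem permDiag_diagonal (π : Equiv.Perm (Fin p)) (d : Fin p → ℝ) :
    permDiag π (diagonal d) = diagonal fun i => d (π⁻¹ i) := by
  unfold permDiag Pmat
  split_ifs
  · exact P0_mul_diagonal_mul_transpose π d
  · rw [mul_mul_transpose_mul, P0_mul_diagonal_mul_transpose, flipMat_mul_diagonal_mul_transpose]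

theorem exists_permDiag_eq_of_mul_mul_transpose_eq {M D D' : Mat p} (hM : Mᵀ * M = 1)
    (hD : D.IsDiag) (hD' : D'.IsDiag) (h : M * D' * Mᵀ = D) : ∃ π, D' = permDiag π D := by
  have hspec : Finset.univ.val.map D.diag = Finset.univ.val.map D'.diag := by
    rw [← roots_charpoly_diagonal, ← roots_charpoly_diagonal, hD.diagonal_diag,
      hD'.diagonal_diag, ← h, charpoly_mul_mul_of_mul_eq_one hM]
  obtain ⟨π, hπ⟩ := Multiset.exists_equiv_of_map_univ_val_eq hspec
  refine ⟨π, ?_⟩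
  rw [← hD.diagonal_diag, permDiag_diagonal, ← hD'.diagonal_diag]
  congr 1
  funext i
  simpa using hπ (π⁻¹ i)

end Rotations

theorem versions_characterization_general {p : ℕ}
    (U D : Mat p) (hU : IsSO U) (hD : IsDiagPos D)
    (Ustar Dstar : Mat p) (hUs : IsSO Ustar) (hDs : IsDiagPos Dstar) :
    Ustar * Dstar * Ustarᵀ = U * D * Uᵀ ↔
      ∃ (π : Equiv.Perm (Fin p)) (R : Mat p), R ∈ GD D ∧
        Ustar = U * R * (Pmat π)ᵀ ∧ Dstar = permDiag π D := by
  constructor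
  · intro hX
    set M := Uᵀ * Ustar
    have hM : IsSO M := hU.transpose.mul hUs
    have hMD : M * Dstar * Mᵀ = D := by
      rw [mul_mul_transpose_mul, hX, transpose_mul_mul_transpose_mul hU.transpose_mul_self]
    obtain ⟨π, rfl⟩ :=
      exists_permDiag_eq_of_mul_mul_transpose_eq hM.transpose_mul_self hD.1 hDs.1 hMD
    refine ⟨π, M * Pmat π, ⟨hM.mul (isSO_Pmat π), ?_⟩, ?_, rfl⟩
    · rwa [mul_mul_transpose_mul]
    · calc Ustar = U * Uᵀ * Ustar * (Pmat π * (Pmat π)ᵀ) := by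
            rw [hU.1, (isSO_Pmat π).1, Matrix.one_mul, Matrix.mul_one]
        _ = U * (M * Pmat π) * (Pmat π)ᵀ := by simp only [M, Matrix.mul_assoc]
  · rintro ⟨π, R, ⟨-, hRD⟩, rfl, rfl⟩
    rw [mul_mul_transpose_mul, permDiag,
      transpose_mul_mul_transpose_mul (isSO_Pmat π).transpose_mul_self,
      mul_mul_transpose_mul, hRD]

/-- characterization of all versions of `X = U D Uᵀ`. -/
theorem versions_characterization {p : ℕ} (hp : 2 ≤ p)
    (U D : Mat p) (hU : IsSO U) (hD : IsDiagPos D)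
    (Ustar Dstar : Mat p) (hUs : IsSO Ustar) (hDs : IsDiagPos Dstar) :
    Ustar * Dstar * Ustarᵀ = U * D * Uᵀ ↔
      ∃ (π : Equiv.Perm (Fin p)) (R : Mat p), R ∈ GD D ∧
        Ustar = U * R * (Pmat π)ᵀ ∧ Dstar = permDiag π D :=
  versions_characterization_general U D hU hD Ustar Dstar hUs hDs
end

section
/- Let p ≥ 2 and fix k > 0. For all X, Y ∈ Sym⁺(p), the scaling–rotation distance satisfies d_SR(X,Y) = d_SR(X⁻¹, Y⁻¹). -/
open Matrix

/-!
Inverting the diagonal factor, `(U, D) ↦ (U, D⁻¹)`, maps the versions of `X` onto those of `X⁻¹`: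
`U D⁻¹ Uᵀ = (U D Uᵀ)⁻¹` because `Uᵀ = U⁻¹`. The rotation component and hence `d_SO` are untouched,
and `d_𝒟` only sees the logarithms of the eigenvalues, which all change sign. So the two infima
defining `d_SR(X, Y)` and `d_SR(X⁻¹, Y⁻¹)` range over the same set of numbers.
-/

namespace IsDiagPos

variable {p : ℕ} {D : Mat p}

theorem inv_eq (hD : IsDiagPos D) : D⁻¹ = Matrix.diagonal fun i => (D i i)⁻¹ := by
  refine Matrix.inv_eq_right_inv ?_
  rw [← hD.1.diagonal_diag, Matrix.diagonal_mul_diagonal, ← Matrix.diagonal_one]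
  exact congrArg Matrix.diagonal (funext fun i => by simpa using mul_inv_cancel₀ (hD.2 i).ne')

theorem inv (hD : IsDiagPos D) : IsDiagPos D⁻¹ := by
  rw [hD.inv_eq]
  exact ⟨Matrix.isDiag_diagonal _, fun i => by simpa using hD.2 i⟩

theorem isUnit_det (hD : IsDiagPos D) : IsUnit D.det := by
  rw [← hD.1.diagonal_diag, Matrix.det_diagonal]
  exact (Finset.prod_pos fun i _ => hD.2 i).ne'.isUnit

end IsDiagPos

theorem IsSO.transpose_eq_inv {p : ℕ} {U : Mat p} (hU : IsSO U) : Uᵀ = U⁻¹ :=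
  (Matrix.inv_eq_right_inv hU.1).symm

theorem dDsq_inv_inv {p : ℕ} {D Λ : Mat p} (hD : IsDiagPos D) (hΛ : IsDiagPos Λ) :
    dDsq D⁻¹ Λ⁻¹ = dDsq D Λ := by
  unfold dDsq
  refine Finset.sum_congr rfl fun i _ => ?_
  rw [hD.inv_eq, hΛ.inv_eq, Matrix.diagonal_apply_eq, Matrix.diagonal_apply_eq,
    Real.log_inv, Real.log_inv]
  ring

theorem gdist_inv_inv {p : ℕ} (k : ℝ) {a b : Mat p × Mat p}
    (ha : IsDiagPos a.2) (hb : IsDiagPos b.2) :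
    gdist k (a.1, a.2⁻¹) (b.1, b.2⁻¹) = gdist k a b := by
  simp only [gdist, dDsq_inv_inv ha hb]

namespace Versions

variable {p : ℕ} {X : Mat p} {a : Mat p × Mat p}

theorem isUnit_det (ha : a ∈ Versions X) : IsUnit X.det := by
  obtain ⟨hU, hD, rfl⟩ := ha
  rw [Matrix.det_mul, Matrix.det_mul, Matrix.det_transpose, hU.2, one_mul, mul_one]
  exact hD.isUnit_det

theorem inv_mem (ha : a ∈ Versions X) : (a.1, a.2⁻¹) ∈ Versions X⁻¹ := by
  obtain ⟨hU, hD, rfl⟩ := ha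
  refine ⟨hU, hD.inv, ?_⟩
  have hUdet : IsUnit a.1.det := hU.2 ▸ isUnit_one
  rw [Matrix.mul_inv_rev, Matrix.mul_inv_rev, hU.transpose_eq_inv,
    Matrix.nonsing_inv_nonsing_inv _ hUdet, Matrix.mul_assoc]

theorem of_mem_inv (ha : a ∈ Versions X⁻¹) : (a.1, a.2⁻¹) ∈ Versions X := by
  have hX : IsUnit X.det := Matrix.isUnit_nonsing_inv_det_iff.1 (isUnit_det ha)
  simpa only [Matrix.nonsing_inv_nonsing_inv X hX] using inv_mem ha

end Versions

theorem dSR_inv_invariant_general {p : ℕ} (k : ℝ) (X Y : Mat p) :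
    dSR k X Y = dSR k X⁻¹ Y⁻¹ := by
  unfold dSR
  congr 1
  ext x
  constructor
  · rintro ⟨a, ha, b, hb, rfl⟩
    exact ⟨_, Versions.inv_mem ha, _, Versions.inv_mem hb, (gdist_inv_inv k ha.2.1 hb.2.1).symm⟩
  · rintro ⟨a, ha, b, hb, rfl⟩
    exact ⟨_, Versions.of_mem_inv ha, _, Versions.of_mem_inv hb,
      (gdist_inv_inv k ha.2.1 hb.2.1).symm⟩

/-- the scaling–rotation distance is invariant under matrix inversion. -/
theorem dSR_inv_invariant {p : ℕ} (hp : 2 ≤ p) (k : ℝ) (hk : 0 < k)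
    (X Y : Mat p) (hX : X.PosDef) (hY : Y.PosDef) :
    dSR k X Y = dSR k X⁻¹ Y⁻¹ :=
  dSR_inv_invariant_general k X Y
end

section
/- Let p ≥ 2 and fix k > 0. For all X, Y ∈ Sym⁺(p), every s > 0, and every R ∈ SO(p), the scaling–rotation distance satisfies d_SR(s·R X Rᵀ, s·R Y Rᵀ) = d_SR(X,Y). -/
open Matrix

/-! The distance is built from a rotation part, invariant under `U ↦ R U` for orthogonal `R`
(conjugating the logarithm `A` by `R` preserves antisymmetry and the Frobenius norm), and a
log-eigenvalue part, invariant under `D ↦ s D` (the `log s` cancels). The map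
`(U, D) ↦ (R U, s D)` therefore carries versions of `X, Y` to versions of `s R X Rᵀ, s R Y Rᵀ`
at the same distance, and its inverse `(s⁻¹, Rᵀ)` carries them back. -/

def dSOsqSet {p : ℕ} (U V : Mat p) : Set ℝ :=
  {x | ∃ A : Mat p, IsAntisym A ∧ NormedSpace.exp A = V * Uᵀ ∧ x = frobSq A / 2}

def dSRSet {p : ℕ} (k : ℝ) (X Y : Mat p) : Set ℝ :=
  {x | ∃ a ∈ Versions X, ∃ b ∈ Versions Y, x = gdist k a b}

section Orthogonal

variable {p : ℕ} {R : Mat p}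

theorem IsSO.transpose_mul (hR : IsSO R) : Rᵀ * R = 1 :=
  mul_eq_one_comm.mp hR.1

theorem IsSO.transpose_s7 (hR : IsSO R) : IsSO Rᵀ :=
  ⟨by rw [transpose_transpose, hR.transpose_mul], by rw [det_transpose, hR.2]⟩

theorem IsAntisym.conj {A : Mat p} (hA : IsAntisym A) (R : Mat p) :
    IsAntisym (R * A * Rᵀ) := by
  rw [IsAntisym, transpose_mul, transpose_mul, transpose_transpose, hA]
  noncomm_ring

theorem exp_conj_of_transpose_mul (hR : Rᵀ * R = 1) (A : Mat p) :
    NormedSpace.exp (R * A * Rᵀ) = R * NormedSpace.exp A * Rᵀ := by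
  have hunit : IsUnit R := ⟨⟨R, Rᵀ, mul_eq_one_comm.mp hR, hR⟩, rfl⟩
  simpa only [inv_eq_left_inv hR] using Matrix.exp_conj R A hunit

theorem frobSq_eq_trace (A : Mat p) : frobSq A = (A * Aᵀ).trace := by
  simp [frobSq, Matrix.trace, Matrix.mul_apply, sq]

theorem frobSq_conj (hR : Rᵀ * R = 1) (A : Mat p) : frobSq (R * A * Rᵀ) = frobSq A := by
  have hprod : (R * A * Rᵀ) * (R * A * Rᵀ)ᵀ = R * (A * Aᵀ) * Rᵀ := by
    simp only [transpose_mul, transpose_transpose, Matrix.mul_assoc]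
    rw [← Matrix.mul_assoc Rᵀ R, hR, Matrix.one_mul]
  rw [frobSq_eq_trace, frobSq_eq_trace, hprod, trace_mul_cycle, ← Matrix.mul_assoc, hR,
    Matrix.one_mul]

theorem dSOsqSet_subset_mul_left (hR : Rᵀ * R = 1) (U V : Mat p) :
    dSOsqSet U V ⊆ dSOsqSet (R * U) (R * V) := by
  rintro _ ⟨A, hA, hexp, rfl⟩
  refine ⟨R * A * Rᵀ, hA.conj R, ?_, by rw [frobSq_conj hR]⟩
  rw [exp_conj_of_transpose_mul hR, hexp, transpose_mul]
  simp only [Matrix.mul_assoc]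

theorem dSOsq_mul_left (hR : Rᵀ * R = 1) (U V : Mat p) :
    dSOsq (R * U) (R * V) = dSOsq U V := by
  have hRt : Rᵀᵀ * Rᵀ = 1 := by rw [transpose_transpose, mul_eq_one_comm.mp hR]
  have hback := dSOsqSet_subset_mul_left hRt (R * U) (R * V)
  rw [← Matrix.mul_assoc, ← Matrix.mul_assoc, hR, Matrix.one_mul, Matrix.one_mul] at hback
  exact congrArg sInf (hback.antisymm (dSOsqSet_subset_mul_left hR U V))

end Orthogonal

theorem dDsq_smul {p : ℕ} {s : ℝ} (hs : 0 < s) {D Λ : Mat p}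
    (hD : ∀ i, 0 < D i i) (hΛ : ∀ i, 0 < Λ i i) :
    dDsq (s • D) (s • Λ) = dDsq D Λ := by
  refine Finset.sum_congr rfl fun i _ => ?_
  rw [Matrix.smul_apply, Matrix.smul_apply, smul_eq_mul, smul_eq_mul,
    Real.log_mul hs.ne' (hΛ i).ne', Real.log_mul hs.ne' (hD i).ne', add_sub_add_left_eq_sub]

theorem gdist_mul_left_smul {p : ℕ} (k : ℝ) {R : Mat p} (hR : Rᵀ * R = 1) {s : ℝ} (hs : 0 < s)
    {a b : Mat p × Mat p} (ha : ∀ i, 0 < a.2 i i) (hb : ∀ i, 0 < b.2 i i) :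
    gdist k (R * a.1, s • a.2) (R * b.1, s • b.2) = gdist k a b := by
  rw [gdist, gdist, dSOsq_mul_left hR, dDsq_smul hs ha hb]

section ScalingRotation

variable {p : ℕ} {s : ℝ} {R : Mat p}

theorem mem_versions_smul_conj (hs : 0 < s) (hR : IsSO R) {X : Mat p} {a : Mat p × Mat p}
    (ha : a ∈ Versions X) : (R * a.1, s • a.2) ∈ Versions (s • (R * X * Rᵀ)) := by
  obtain ⟨⟨hU, hUdet⟩, ⟨hDdiag, hDpos⟩, rfl⟩ := ha
  refine ⟨⟨?_, by rw [det_mul, hUdet, hR.2, mul_one]⟩, ⟨hDdiag.smul s, fun i => ?_⟩, ?_⟩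
  · rw [transpose_mul, show R * a.1 * (a.1ᵀ * Rᵀ) = R * (a.1 * a.1ᵀ) * Rᵀ by noncomm_ring, hU,
      Matrix.mul_one, hR.1]
  · exact mul_pos hs (hDpos i)
  · rw [transpose_mul, Matrix.mul_smul, Matrix.smul_mul]
    simp only [Matrix.mul_assoc]

theorem dSRSet_subset_smul_conj (k : ℝ) (hs : 0 < s) (hR : IsSO R) (X Y : Mat p) :
    dSRSet k X Y ⊆ dSRSet k (s • (R * X * Rᵀ)) (s • (R * Y * Rᵀ)) := by
  rintro _ ⟨a, ha, b, hb, rfl⟩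
  exact ⟨_, mem_versions_smul_conj hs hR ha, _, mem_versions_smul_conj hs hR hb,
    (gdist_mul_left_smul k hR.transpose_mul hs ha.2.1.2 hb.2.1.2).symm⟩

theorem inv_smul_conj_smul_conj (hs : 0 < s) (hR : IsSO R) (Z : Mat p) :
    s⁻¹ • (Rᵀ * (s • (R * Z * Rᵀ)) * Rᵀᵀ) = Z := by
  rw [transpose_transpose, Matrix.mul_smul, Matrix.smul_mul, smul_smul,
    inv_mul_cancel₀ hs.ne', one_smul,
    show Rᵀ * (R * Z * Rᵀ) * R = (Rᵀ * R) * Z * (Rᵀ * R) by noncomm_ring, hR.transpose_mul,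
    Matrix.one_mul, Matrix.mul_one]

end ScalingRotation

theorem dSR_scaling_rotation_invariant_general {p : ℕ} (k : ℝ)
    (X Y : Mat p)
    (s : ℝ) (hs : 0 < s) (R : Mat p) (hR : IsSO R) :
    dSR k (s • (R * X * Rᵀ)) (s • (R * Y * Rᵀ)) = dSR k X Y := by
  have hback := dSRSet_subset_smul_conj k (inv_pos.mpr hs) hR.transpose_s7
    (s • (R * X * Rᵀ)) (s • (R * Y * Rᵀ))
  rw [inv_smul_conj_smul_conj hs hR, inv_smul_conj_smul_conj hs hR] at hback
  exact congrArg sInf (hback.antisymm (dSRSet_subset_smul_conj k hs hR X Y))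

/-- invariance of the scaling–rotation distance under simultaneous
uniform scaling and conjugation by a rotation matrix. -/
theorem dSR_scaling_rotation_invariant {p : ℕ} (hp : 2 ≤ p) (k : ℝ) (hk : 0 < k)
    (X Y : Mat p) (hX : X.PosDef) (hY : Y.PosDef)
    (s : ℝ) (hs : 0 < s) (R : Mat p) (hR : IsSO R) :
    dSR k (s • (R * X * Rᵀ)) (s • (R * Y * Rᵀ)) = dSR k X Y :=
  dSR_scaling_rotation_invariant_general k X Y s hs R hR
end

section
/- Let p ≥ 2 and fix k > 0. Let X, Y ∈ Sym⁺(p) and suppose ((U,D),(V,Λ)) ∈ 𝓔_X × 𝓔_Y attains the infimum defining d_SR(X,Y), i.e. d((U,D),(V,Λ)) = d_SR(X,Y). Let A be a p×p real antisymmetric matrix with exp(A) = V Uᵀ of minimal Frobenius norm among all such antisymmetric matrices, and let L := log(D⁻¹Λ) ∈ Diag(p) (entrywise logarithm of the diagonal). Then the scaling–rotation curve χ(t) := exp(At) U D exp(Lt) Uᵀ exp(Aᵀt) satisfies χ(0) = X, χ(1) = Y, and k·‖A‖_F²/2 + ‖L‖_F² = d_SR(X,Y)². -/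
open Matrix

/-!
At `t = 1` the curve is `(V Uᵀ) U D (D⁻¹Λ) Uᵀ (U Vᵀ) = V Λ Vᵀ = Y`, since `exp A = V Uᵀ` and
`exp L = D⁻¹Λ`. For its length: minimality of `A` makes `‖A‖_F²/2` the infimum `d_SO(U,V)²`,
`‖L‖_F² = Σᵢ (log λᵢ - log dᵢ)² = d_𝒟(D,Λ)²`, and minimality of the pair of versions
gives `d((U,D),(V,Λ)) = d_SR(X,Y)`.
-/

lemma frobSq_nonneg {p : ℕ} (A : Mat p) : 0 ≤ frobSq A :=
  Finset.sum_nonneg fun _ _ => Finset.sum_nonneg fun _ _ => sq_nonneg _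

lemma frobSq_diagonal {p : ℕ} (d : Fin p → ℝ) : frobSq (diagonal d) = ∑ i, d i ^ 2 := by
  refine Finset.sum_congr rfl fun i _ => ?_
  rw [Finset.sum_eq_single i (fun j _ hji => by simp [diagonal_apply_ne _ hji.symm])
    (by simp), diagonal_apply_eq]

lemma dSOsq_nonneg {p : ℕ} (U V : Mat p) : 0 ≤ dSOsq U V :=
  Real.sInf_nonneg <| by
    rintro _ ⟨A, -, -, rfl⟩
    exact div_nonneg (frobSq_nonneg A) zero_le_two

lemma dDsq_nonneg {p : ℕ} (D Λ : Mat p) : 0 ≤ dDsq D Λ :=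
  Finset.sum_nonneg fun _ _ => sq_nonneg _

lemma gdist_sq {p : ℕ} {k : ℝ} (hk : 0 ≤ k) (a b : Mat p × Mat p) :
    gdist k a b ^ 2 = k * dSOsq a.1 b.1 + dDsq a.2 b.2 :=
  Real.sq_sqrt <| add_nonneg (mul_nonneg hk (dSOsq_nonneg _ _)) (dDsq_nonneg _ _)

lemma dSOsq_eq_of_forall_le {p : ℕ} {U V A : Mat p} (hA : IsAntisym A)
    (hexp : NormedSpace.exp A = V * Uᵀ)
    (hAmin : ∀ A' : Mat p, IsAntisym A' → NormedSpace.exp A' = V * Uᵀ → frobSq A ≤ frobSq A') :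
    dSOsq U V = frobSq A / 2 := by
  refine IsLeast.csInf_eq ⟨⟨A, hA, hexp, rfl⟩, ?_⟩
  rintro _ ⟨A', hA', hexp', rfl⟩
  exact div_le_div_of_nonneg_right (hAmin A' hA' hexp') zero_le_two

lemma dDsq_eq_frobSq_log {p : ℕ} {D Λ : Mat p} (hD : ∀ i, 0 < D i i) (hΛ : ∀ i, 0 < Λ i i) :
    dDsq D Λ = frobSq (diagonal fun i => Real.log ((D i i)⁻¹ * Λ i i)) := by
  rw [frobSq_diagonal]
  refine Finset.sum_congr rfl fun i _ => ?_
  rw [Real.log_mul (inv_ne_zero (hD i).ne') (hΛ i).ne', Real.log_inv, neg_add_eq_sub]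

lemma exp_diagonal_log {p : ℕ} {d : Fin p → ℝ} (hd : ∀ i, 0 < d i) :
    NormedSpace.exp (diagonal fun i => Real.log (d i)) = diagonal d := by
  rw [exp_diagonal]
  congr 1
  funext i
  rw [Pi.coe_exp, ← Real.exp_eq_exp_ℝ, Real.exp_log (hd i)]

lemma mul_diagonal_inv_mul {p : ℕ} {D Λ : Mat p} (hD : D.IsDiag) (hD0 : ∀ i, D i i ≠ 0)
    (hΛ : Λ.IsDiag) : D * diagonal (fun i => (D i i)⁻¹ * Λ i i) = Λ := by
  rw [← hD.diagonal_diag, diagonal_mul_diagonal, ← hΛ.diagonal_diag]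
  congr 1
  funext i
  simp [mul_inv_cancel_left₀ (hD0 i)]

lemma mul_transpose_conj_of_transpose_mul_self {p : ℕ} {U : Mat p} (hU : Uᵀ * U = 1)
    (V M : Mat p) : V * Uᵀ * U * M * Uᵀ * (V * Uᵀ)ᵀ = V * M * Vᵀ := by
  simp only [transpose_mul, transpose_transpose, Matrix.mul_assoc]
  rw [← Matrix.mul_assoc Uᵀ U, hU, Matrix.one_mul, ← Matrix.mul_assoc Uᵀ U, hU, Matrix.one_mul]

theorem minimal_pair_gives_minimal_curve_general {p : ℕ} (k : ℝ) (hk : 0 < k)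
    (X Y : Mat p)
    (U D V Λ : Mat p) (hUD : (U, D) ∈ Versions X) (hVL : (V, Λ) ∈ Versions Y)
    (hmin : gdist k (U, D) (V, Λ) = dSR k X Y)
    (A : Mat p) (hA : IsAntisym A) (hexp : NormedSpace.exp A = V * Uᵀ)
    (hAmin : ∀ A' : Mat p, IsAntisym A' → NormedSpace.exp A' = V * Uᵀ →
      frobSq A ≤ frobSq A')
    (L : Mat p) (hLdef : L = Matrix.diagonal fun i => Real.log ((D i i)⁻¹ * Λ i i)) :
    (NormedSpace.exp ((0 : ℝ) • A) * U * D * NormedSpace.exp ((0 : ℝ) • L) * Uᵀ *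
        NormedSpace.exp ((0 : ℝ) • Aᵀ) = X) ∧
    (NormedSpace.exp ((1 : ℝ) • A) * U * D * NormedSpace.exp ((1 : ℝ) • L) * Uᵀ *
        NormedSpace.exp ((1 : ℝ) • Aᵀ) = Y) ∧
    k * frobSq A / 2 + frobSq L = (dSR k X Y) ^ 2 := by
  obtain ⟨hU, hD, rfl⟩ := hUD
  obtain ⟨-, hΛ, rfl⟩ := hVL
  have hexpL : NormedSpace.exp L = diagonal fun i => (D i i)⁻¹ * Λ i i :=
    hLdef ▸ exp_diagonal_log fun i => mul_pos (inv_pos.mpr (hD.2 i)) (hΛ.2 i)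
  refine ⟨?_, ?_, ?_⟩
  · simp only [zero_smul, NormedSpace.exp_zero, Matrix.mul_one, Matrix.one_mul]
  · simp only [one_smul, exp_transpose, hexp, hexpL]
    rw [Matrix.mul_assoc _ D, mul_diagonal_inv_mul hD.1 (fun i => (hD.2 i).ne') hΛ.1,
      mul_transpose_conj_of_transpose_mul_self (mul_eq_one_comm.mp hU.1)]
  · rw [← hmin, gdist_sq hk.le, dSOsq_eq_of_forall_le hA hexp hAmin,
      dDsq_eq_frobSq_log hD.2 hΛ.2, ← hLdef]
    ring

/-- the scaling–rotation curve built from a minimal pair joins `X` to `Y`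
and has squared length `d_SR(X,Y)²`. -/
theorem minimal_pair_gives_minimal_curve {p : ℕ} (hp : 2 ≤ p) (k : ℝ) (hk : 0 < k)
    (X Y : Mat p) (hX : X.PosDef) (hY : Y.PosDef)
    (U D V Λ : Mat p) (hUD : (U, D) ∈ Versions X) (hVL : (V, Λ) ∈ Versions Y)
    (hmin : gdist k (U, D) (V, Λ) = dSR k X Y)
    (A : Mat p) (hA : IsAntisym A) (hexp : NormedSpace.exp A = V * Uᵀ)
    (hAmin : ∀ A' : Mat p, IsAntisym A' → NormedSpace.exp A' = V * Uᵀ →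
      frobSq A ≤ frobSq A')
    (L : Mat p) (hLdef : L = Matrix.diagonal fun i => Real.log ((D i i)⁻¹ * Λ i i)) :
    (NormedSpace.exp ((0 : ℝ) • A) * U * D * NormedSpace.exp ((0 : ℝ) • L) * Uᵀ *
        NormedSpace.exp ((0 : ℝ) • Aᵀ) = X) ∧
    (NormedSpace.exp ((1 : ℝ) • A) * U * D * NormedSpace.exp ((1 : ℝ) • L) * Uᵀ *
        NormedSpace.exp ((1 : ℝ) • Aᵀ) = Y) ∧
    k * frobSq A / 2 + frobSq L = (dSR k X Y) ^ 2 :=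
  minimal_pair_gives_minimal_curve_general k hk X Y U D V Λ hUD hVL hmin A hA hexp hAmin L hLdef
end

section
/- Fix k > 0 and let X, Y ∈ Sym⁺(2) each have two distinct eigenvalues. Let (U,D) be any version of X and (V,Λ) any version of Y. Then d_SR(X,Y) = min{ d((U I_σ P_πᵀ, D_π), (V,Λ)) : σ ∈ {(1,1),(−1,−1)}, π a permutation of {1,2} }, the minimum over the four resulting versions of X. -/
open Matrix

/-!
Two versions `(U, D)` and `(U', D')` of the same matrix differ by the rotation `R = Uᵀ U'`,
which satisfies `R D' Rᵀ = D`. In dimension two, when `D` has distinct diagonal entries, such an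
`R` must be one of the quarter turns `±1, ±J` (`J` the rotation by `π / 2`), so the versions of
`X` are exactly the four pairs `(U R, Rᵀ D R)`. The right action `(U, D) ↦ (U R, Rᵀ D R)` of a
quarter turn is an isometry of `SO(2) × Diag⁺(2)`: it fixes `V Uᵀ` and permutes the
log-eigenvalues of both arguments in the same way. Hence every pair of versions of `X` and `Y`
can be moved to a pair whose second entry is `(V, Λ)`, and the infimum runs over four values.
-/

namespace ScalingRotation

lemma csInf_four {α : Type*} [ConditionallyCompleteLinearOrder α] (a b c d : α) :
    sInf {a, b, c, d} = min a (min b (min c d)) := by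
  rw [csInf_insert (Set.toFinite _).bddBelow (Set.insert_nonempty _ _),
    csInf_insert (Set.toFinite _).bddBelow (Set.insert_nonempty _ _), csInf_pair]

section General

variable {p : ℕ}

def rightAct (R : Mat p) (a : Mat p × Mat p) : Mat p × Mat p :=
  (a.1 * R, Rᵀ * a.2 * R)

lemma rightAct_transpose_rightAct {R : Mat p} (hR : R * Rᵀ = 1) (a : Mat p × Mat p) :
    rightAct Rᵀ (rightAct R a) = a := by
  simp only [rightAct, transpose_transpose, Matrix.mul_assoc, hR, Matrix.mul_one]
  rw [← Matrix.mul_assoc R, hR, Matrix.one_mul]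

lemma rightAct_mem_versions {X R : Mat p} {a : Mat p × Mat p} (ha : a ∈ Versions X)
    (hR : IsSO R) (hdiag : IsDiagPos (Rᵀ * a.2 * R)) : rightAct R a ∈ Versions X := by
  obtain ⟨⟨hU, hUdet⟩, -, hX⟩ := ha
  refine ⟨⟨?_, by simp [rightAct, det_mul, hUdet, hR.2]⟩, hdiag, ?_⟩
  · calc a.1 * R * (a.1 * R)ᵀ = a.1 * (R * Rᵀ) * a.1ᵀ := by
          simp only [transpose_mul, Matrix.mul_assoc]
      _ = 1 := by rw [hR.1, Matrix.mul_one, hU]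
  · calc a.1 * R * (Rᵀ * a.2 * R) * (a.1 * R)ᵀ
        = a.1 * (R * Rᵀ) * a.2 * (R * Rᵀ) * a.1ᵀ := by simp only [transpose_mul, Matrix.mul_assoc]
      _ = X := by rw [hR.1, Matrix.mul_one, Matrix.mul_one, hX]

lemma eq_rightAct_of_mem_versions {X U D : Mat p} (hUD : (U, D) ∈ Versions X)
    {a : Mat p × Mat p} (ha : a ∈ Versions X) :
    IsSO (Uᵀ * a.1) ∧ Uᵀ * a.1 * a.2 * (Uᵀ * a.1)ᵀ = D ∧ a = rightAct (Uᵀ * a.1) (U, D) := by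
  obtain ⟨⟨hU, hUdet⟩, -, hUX⟩ := hUD
  obtain ⟨⟨ha1, ha1det⟩, -, haX⟩ := ha
  have hUtU : Uᵀ * U = 1 := mul_eq_one_comm.mp hU
  set R := Uᵀ * a.1
  have hRRt : R * Rᵀ = 1 := by
    calc R * Rᵀ = Uᵀ * (a.1 * a.1ᵀ) * U := by
          simp only [R, transpose_mul, transpose_transpose, Matrix.mul_assoc]
      _ = 1 := by rw [ha1, Matrix.mul_one, hUtU]
  have hconj : R * a.2 * Rᵀ = D := by
    calc R * a.2 * Rᵀ = Uᵀ * (a.1 * a.2 * a.1ᵀ) * U := by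
          simp only [R, transpose_mul, transpose_transpose, Matrix.mul_assoc]
      _ = (Uᵀ * U) * D * (Uᵀ * U) := by rw [haX, ← hUX]; simp only [Matrix.mul_assoc]
      _ = D := by rw [hUtU, Matrix.one_mul, Matrix.mul_one]
  refine ⟨⟨hRRt, by simp [R, det_mul, hUdet, ha1det]⟩, hconj, Prod.ext ?_ ?_⟩
  · simp only [rightAct, R, ← Matrix.mul_assoc, hU, Matrix.one_mul]
  · have hRtR : Rᵀ * R = 1 := mul_eq_one_comm.mp hRRt
    calc a.2 = (Rᵀ * R) * a.2 * (Rᵀ * R) := by rw [hRtR, Matrix.one_mul, Matrix.mul_one]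
      _ = Rᵀ * (R * a.2 * Rᵀ) * R := by simp only [Matrix.mul_assoc]
      _ = (rightAct R (U, D)).2 := by rw [hconj]; rfl

lemma dSOsq_mul_right {W : Mat p} (hW : W * Wᵀ = 1) (A B : Mat p) :
    dSOsq (A * W) (B * W) = dSOsq A B := by
  have h : B * W * (A * W)ᵀ = B * Aᵀ := by
    rw [transpose_mul, Matrix.mul_assoc, ← Matrix.mul_assoc W, hW, Matrix.one_mul]
  simp only [dSOsq, h]

lemma dDsq_diagonal_perm (π : Equiv.Perm (Fin p)) (D Λ : Mat p) :
    dDsq (diagonal fun i => D (π i) (π i)) (diagonal fun i => Λ (π i) (π i)) = dDsq D Λ := by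
  simp only [dDsq, diagonal_apply_eq]
  exact Equiv.sum_comp π fun i => (Real.log (Λ i i) - Real.log (D i i)) ^ 2

lemma Pmat_refl : Pmat (Equiv.refl (Fin p)) = 1 := by
  have h : P0 (Equiv.refl (Fin p)) = 1 := by
    ext i j
    by_cases hij : i = j <;> simp [P0, one_apply, hij]
  simp [Pmat, h]

lemma rightAct_diagonal_const_mul_Pmat_transpose {σ : ℝ} (hσ : σ * σ = 1)
    (π : Equiv.Perm (Fin p)) (U D : Mat p) :
    rightAct (diagonal (fun _ => σ) * (Pmat π)ᵀ) (U, D) =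
      (U * diagonal (fun _ => σ) * (Pmat π)ᵀ, permDiag π D) := by
  simp only [rightAct, permDiag, ← smul_one_eq_diagonal, transpose_transpose, transpose_smul,
    Matrix.mul_assoc, Matrix.smul_mul, Matrix.mul_smul, Matrix.one_mul, smul_smul, hσ, one_smul]

end General

section TwoByTwo

def rot90 : Mat 2 := !![0, -1; 1, 0]

lemma transpose_rot90 : rot90ᵀ = -rot90 := by
  ext i j; fin_cases i <;> fin_cases j <;> simp [rot90]

lemma rot90_mul_transpose : rot90 * rot90ᵀ = 1 := by
  rw [transpose_rot90, one_fin_two]; norm_num [rot90, mul_fin_two]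

lemma Pmat_swap : Pmat (Equiv.swap (0 : Fin 2) 1) = rot90 := by
  have h0 : P0 (Equiv.swap (0 : Fin 2) 1) = !![0, 1; 1, 0] := by
    ext i j; fin_cases i <;> fin_cases j <;> simp [P0, Equiv.swap_apply_def]
  have hflip : flipMat 2 = !![-1, 0; 0, 1] := by
    ext i j; fin_cases i <;> fin_cases j <;> simp [flipMat]
  rw [Pmat, h0, if_neg (by norm_num [det_fin_two_of]), hflip, rot90]
  norm_num [mul_fin_two]

def quarterTurns : Set (Mat 2) := {1, rot90, -1, -rot90}

lemma isSO_of_mem_quarterTurns {R : Mat 2} (hR : R ∈ quarterTurns) : IsSO R := by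
  have hrot : IsSO rot90 := ⟨rot90_mul_transpose, by norm_num [rot90, det_fin_two_of]⟩
  rcases hR with rfl | rfl | rfl | rfl
  · exact ⟨by simp, det_one⟩
  · exact hrot
  · exact ⟨by simp, by simp [det_neg]⟩
  · exact ⟨by simpa using hrot.1, by simpa [det_neg] using hrot.2⟩

lemma transpose_mem_quarterTurns {R : Mat 2} (hR : R ∈ quarterTurns) : Rᵀ ∈ quarterTurns := by
  rcases hR with rfl | rfl | rfl | rfl <;> simp [quarterTurns, transpose_rot90]

lemma exists_perm_conj_eq_diagonal {R : Mat 2} (hR : R ∈ quarterTurns) :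
    ∃ π : Equiv.Perm (Fin 2), ∀ D : Mat 2, D.IsDiag →
      Rᵀ * D * R = diagonal fun i => D (π i) (π i) := by
  have hrot (D : Mat 2) (hD : D.IsDiag) :
      rot90ᵀ * D * rot90 = diagonal fun i => D (Equiv.swap 0 1 i) (Equiv.swap 0 1 i) := by
    rw [← hD.diagonal_diag]
    ext i j; fin_cases i <;> fin_cases j <;> simp [rot90, mul_apply, Fin.sum_univ_two]
  rcases hR with rfl | rfl | rfl | rfl
  · refine ⟨Equiv.refl _, fun D hD => ?_⟩
    simp only [transpose_one, Matrix.one_mul, Matrix.mul_one]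
    exact hD.diagonal_diag.symm
  · exact ⟨_, hrot⟩
  · refine ⟨Equiv.refl _, fun D hD => ?_⟩
    simp only [transpose_neg, transpose_one, neg_mul, mul_neg, neg_neg, Matrix.one_mul,
      Matrix.mul_one]
    exact hD.diagonal_diag.symm
  · exact ⟨_, fun D hD => by simpa using hrot D hD⟩

lemma rightAct_mem_versions_of_mem_quarterTurns {X R : Mat 2} {a : Mat 2 × Mat 2}
    (hR : R ∈ quarterTurns) (ha : a ∈ Versions X) : rightAct R a ∈ Versions X := by
  obtain ⟨π, hπ⟩ := exists_perm_conj_eq_diagonal hR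
  refine rightAct_mem_versions ha (isSO_of_mem_quarterTurns hR) ?_
  rw [hπ a.2 ha.2.1.1]
  exact ⟨isDiag_diagonal _, fun i => by simpa using ha.2.1.2 (π i)⟩

lemma gdist_rightAct (k : ℝ) {R : Mat 2} (hR : R ∈ quarterTurns) {a b : Mat 2 × Mat 2}
    (ha : a.2.IsDiag) (hb : b.2.IsDiag) :
    gdist k (rightAct R a) (rightAct R b) = gdist k a b := by
  obtain ⟨π, hπ⟩ := exists_perm_conj_eq_diagonal hR
  simp only [gdist, rightAct, dSOsq_mul_right (isSO_of_mem_quarterTurns hR).1, hπ _ ha, hπ _ hb,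
    dDsq_diagonal_perm]

lemma eq_rotation_of_isSO {R : Mat 2} (hR : IsSO R) :
    ∃ c s : ℝ, c ^ 2 + s ^ 2 = 1 ∧ R = !![c, -s; s, c] := by
  obtain ⟨hRRt, hdet⟩ := hR
  have h00 : R 0 0 * R 0 0 + R 0 1 * R 0 1 = 1 := by
    simpa [mul_apply, Fin.sum_univ_two] using congr_fun₂ hRRt 0 0
  have h01 : R 0 0 * R 1 0 + R 0 1 * R 1 1 = 0 := by
    simpa [mul_apply, Fin.sum_univ_two] using congr_fun₂ hRRt 0 1
  rw [det_fin_two] at hdet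
  have hd : R 1 1 = R 0 0 := by linear_combination R 0 0 * hdet + R 0 1 * h01 - R 1 1 * h00
  rw [hd] at hdet h01
  have hc : R 0 1 = -R 1 0 := by
    linear_combination R 0 0 * h01 + R 0 1 * (h00 - hdet) - (R 0 1 + R 1 0) * h00
  refine ⟨R 0 0, R 1 0, by linear_combination h00 - (R 0 1 - R 1 0) * hc, ?_⟩
  ext i j; fin_cases i <;> fin_cases j <;> simp [hd, hc]

lemma rotation_mul_diagonal_mul_transpose (c s e₀ e₁ : ℝ) :
    !![c, -s; s, c] * diagonal ![e₀, e₁] * !![c, -s; s, c]ᵀ =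
      !![c ^ 2 * e₀ + s ^ 2 * e₁, c * s * (e₀ - e₁);
        c * s * (e₀ - e₁), s ^ 2 * e₀ + c ^ 2 * e₁] := by
  ext i j
  fin_cases i <;> fin_cases j <;> simp [mul_apply, vecMul, dotProduct, Fin.sum_univ_two] <;> ring

lemma mem_quarterTurns_of_conj {R E D : Mat 2} (hR : IsSO R) (hE : E.IsDiag) (hD : D.IsDiag)
    (hconj : R * E * Rᵀ = D) (hne : D 0 0 ≠ D 1 1) : R ∈ quarterTurns := by
  obtain ⟨c, s, hcs, rfl⟩ := eq_rotation_of_isSO hR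
  have hE' : E = diagonal ![E 0 0, E 1 1] := by
    rw [← hE.diagonal_diag]
    congr 1
    ext i; fin_cases i <;> rfl
  rw [hE', rotation_mul_diagonal_mul_transpose] at hconj
  have g00 : c ^ 2 * E 0 0 + s ^ 2 * E 1 1 = D 0 0 := congr_fun₂ hconj 0 0
  have g01 : c * s * (E 0 0 - E 1 1) = D 0 1 := congr_fun₂ hconj 0 1
  have g11 : s ^ 2 * E 0 0 + c ^ 2 * E 1 1 = D 1 1 := congr_fun₂ hconj 1 1
  have hEne : E 0 0 - E 1 1 ≠ 0 := fun h =>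
    hne (by linear_combination g11 - g00 + (c ^ 2 - s ^ 2) * h)
  have hcs0 : c * s = 0 :=
    (mul_eq_zero.mp (g01.trans (hD (by decide)))).resolve_right hEne
  rcases mul_eq_zero.mp hcs0 with rfl | rfl
  · rcases mul_self_eq_one_iff.mp (by linear_combination hcs : s * s = 1) with rfl | rfl <;>
      simp [quarterTurns, rot90, ← Matrix.ext_iff, Fin.forall_fin_two]
  · rcases mul_self_eq_one_iff.mp (by linear_combination hcs : c * c = 1) with rfl | rfl <;>
      simp [quarterTurns, rot90, ← Matrix.ext_iff, Fin.forall_fin_two]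

lemma mem_versions_iff_of_diag_ne {X U D : Mat 2} (hUD : (U, D) ∈ Versions X) (hne : D 0 0 ≠ D 1 1)
    {a : Mat 2 × Mat 2} : a ∈ Versions X ↔ ∃ R ∈ quarterTurns, a = rightAct R (U, D) := by
  constructor
  · intro ha
    obtain ⟨hR, hconj, heq⟩ := eq_rightAct_of_mem_versions hUD ha
    exact ⟨_, mem_quarterTurns_of_conj hR ha.2.1.1 hUD.2.1.1 hconj hne, heq⟩
  · rintro ⟨R, hR, rfl⟩
    exact rightAct_mem_versions_of_mem_quarterTurns hR hUD

lemma diag_ne_of_injective_eigenvalues {X U D : Mat 2} (hX : X.IsHermitian)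
    (hd : Function.Injective hX.eigenvalues) (hUD : (U, D) ∈ Versions X) : D 0 0 ≠ D 1 1 := by
  obtain ⟨⟨hU, -⟩, ⟨hDdiag, -⟩, hUX⟩ : IsSO U ∧ IsDiagPos D ∧ U * D * Uᵀ = X := hUD
  intro hD
  have hscalar : D = D 0 0 • (1 : Mat 2) := by
    ext i j
    fin_cases i <;> fin_cases j <;>
      simp [hD, hDdiag (show (0 : Fin 2) ≠ 1 by decide), hDdiag (show (1 : Fin 2) ≠ 0 by decide)]
  have hXscalar : X = algebraMap ℝ (Mat 2) (D 0 0) := by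
    calc X = U * (D 0 0 • (1 : Mat 2)) * Uᵀ := by rw [← hscalar, hUX]
      _ = algebraMap ℝ (Mat 2) (D 0 0) := by
        rw [Algebra.algebraMap_eq_smul_one, Matrix.mul_smul, Matrix.smul_mul, Matrix.mul_one, hU]
  have hspec : spectrum ℝ X = {D 0 0} := by rw [hXscalar, spectrum.scalar_eq]
  have h0 := hX.eigenvalues_mem_spectrum_real 0
  have h1 := hX.eigenvalues_mem_spectrum_real 1
  rw [hspec, Set.mem_singleton_iff] at h0 h1
  exact absurd (hd (h0.trans h1.symm)) (by decide)

lemma setOf_gdist_eq_image_quarterTurns {k : ℝ} {X Y U D V Λ : Mat 2}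
    (hUD : (U, D) ∈ Versions X) (hD : D 0 0 ≠ D 1 1)
    (hVΛ : (V, Λ) ∈ Versions Y) (hΛ : Λ 0 0 ≠ Λ 1 1) :
    {x | ∃ a ∈ Versions X, ∃ b ∈ Versions Y, x = gdist k a b} =
      (fun R => gdist k (rightAct R (U, D)) (V, Λ)) '' quarterTurns := by
  ext x
  constructor
  · rintro ⟨a, ha, b, hb, rfl⟩
    obtain ⟨R, hR, rfl⟩ := (mem_versions_iff_of_diag_ne hVΛ hΛ).mp hb
    have hRt := transpose_mem_quarterTurns hR
    obtain ⟨S, hS, hSa⟩ := (mem_versions_iff_of_diag_ne hUD hD).mp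
      (rightAct_mem_versions_of_mem_quarterTurns hRt ha)
    refine ⟨S, hS, ?_⟩
    calc gdist k (rightAct S (U, D)) (V, Λ)
        = gdist k (rightAct Rᵀ a) (rightAct Rᵀ (rightAct R (V, Λ))) := by
          rw [hSa, rightAct_transpose_rightAct (isSO_of_mem_quarterTurns hR).1]
      _ = gdist k a (rightAct R (V, Λ)) :=
          gdist_rightAct k hRt ha.2.1.1 (rightAct_mem_versions_of_mem_quarterTurns hR hVΛ).2.1.1
  · rintro ⟨R, hR, rfl⟩
    exact ⟨_, rightAct_mem_versions_of_mem_quarterTurns hR hUD, _, hVΛ, rfl⟩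

end TwoByTwo

end ScalingRotation

open ScalingRotation

theorem dSR_two_by_two_distinct_general {k : ℝ}
    (X Y : Mat 2) (hX : X.PosDef) (hY : Y.PosDef)
    (hdX : Function.Injective hX.1.eigenvalues)
    (hdY : Function.Injective hY.1.eigenvalues)
    (U D V Λ : Mat 2) (hUD : (U, D) ∈ Versions X) (hVL : (V, Λ) ∈ Versions Y) :
    dSR k X Y =
      min
        (min
          (gdist k (U * Matrix.diagonal (fun _ => (1 : ℝ)) * (Pmat (Equiv.refl (Fin 2)))ᵀ,
              permDiag (Equiv.refl (Fin 2)) D) (V, Λ))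
          (gdist k (U * Matrix.diagonal (fun _ => (1 : ℝ)) * (Pmat (Equiv.swap (0 : Fin 2) 1))ᵀ,
              permDiag (Equiv.swap (0 : Fin 2) 1) D) (V, Λ)))
        (min
          (gdist k (U * Matrix.diagonal (fun _ => (-1 : ℝ)) * (Pmat (Equiv.refl (Fin 2)))ᵀ,
              permDiag (Equiv.refl (Fin 2)) D) (V, Λ))
          (gdist k (U * Matrix.diagonal (fun _ => (-1 : ℝ)) * (Pmat (Equiv.swap (0 : Fin 2) 1))ᵀ,
              permDiag (Equiv.swap (0 : Fin 2) 1) D) (V, Λ))) := by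
  have hD := diag_ne_of_injective_eigenvalues hX.1 hdX hUD
  have hΛ := diag_ne_of_injective_eigenvalues hY.1 hdY hVL
  have hdiag_neg_one : diagonal (fun _ : Fin 2 => (-1 : ℝ)) = -1 := by
    rw [← diagonal_one, ← diagonal_neg]
  have hone : (1 : ℝ) * 1 = 1 := one_mul 1
  have hneg_one : (-1 : ℝ) * -1 = 1 := by norm_num
  rw [← rightAct_diagonal_const_mul_Pmat_transpose hone (Equiv.refl _),
    ← rightAct_diagonal_const_mul_Pmat_transpose hone (Equiv.swap _ _),
    ← rightAct_diagonal_const_mul_Pmat_transpose hneg_one (Equiv.refl _),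
    ← rightAct_diagonal_const_mul_Pmat_transpose hneg_one (Equiv.swap _ _)]
  simp only [diagonal_one, hdiag_neg_one, Pmat_refl, Pmat_swap, transpose_one, transpose_rot90,
    Matrix.mul_one, Matrix.one_mul, neg_one_mul, neg_neg]
  rw [dSR, setOf_gdist_eq_image_quarterTurns hUD hD hVL hΛ, quarterTurns, Set.image_insert_eq,
    Set.image_insert_eq, Set.image_insert_eq, Set.image_singleton, csInf_four]
  ac_rfl

/-- for `2 × 2` SPD matrices with distinct eigenvalues, the
scaling–rotation distance is the minimum over the four versions of `X`. -/
theorem dSR_two_by_two_distinct {k : ℝ} (hk : 0 < k)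
    (X Y : Mat 2) (hX : X.PosDef) (hY : Y.PosDef)
    (hdX : Function.Injective hX.1.eigenvalues)
    (hdY : Function.Injective hY.1.eigenvalues)
    (U D V Λ : Mat 2) (hUD : (U, D) ∈ Versions X) (hVL : (V, Λ) ∈ Versions Y) :
    dSR k X Y =
      min
        (min
          (gdist k (U * Matrix.diagonal (fun _ => (1 : ℝ)) * (Pmat (Equiv.refl (Fin 2)))ᵀ,
              permDiag (Equiv.refl (Fin 2)) D) (V, Λ))
          (gdist k (U * Matrix.diagonal (fun _ => (1 : ℝ)) * (Pmat (Equiv.swap (0 : Fin 2) 1))ᵀ,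
              permDiag (Equiv.swap (0 : Fin 2) 1) D) (V, Λ)))
        (min
          (gdist k (U * Matrix.diagonal (fun _ => (-1 : ℝ)) * (Pmat (Equiv.refl (Fin 2)))ᵀ,
              permDiag (Equiv.refl (Fin 2)) D) (V, Λ))
          (gdist k (U * Matrix.diagonal (fun _ => (-1 : ℝ)) * (Pmat (Equiv.swap (0 : Fin 2) 1))ᵀ,
              permDiag (Equiv.swap (0 : Fin 2) 1) D) (V, Λ))) :=
  dSR_two_by_two_distinct_general X Y hX hY hdX hdY U D V Λ hUD hVL
end

section
/- Fix k > 0 and let X = d₁·I₂ ∈ Sym⁺(2) for some d₁ > 0 (both eigenvalues of X equal). Then for any version (V,Λ) of Y ∈ Sym⁺(2), one has d_SR(X,Y) = d((V, d₁·I₂), (V,Λ)) = d_𝒟(d₁·I₂, Λ), regardless of whether the eigenvalues of Y are distinct or not. -/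
open Matrix

lemma dSOsq_self {p : ℕ} {V : Mat p} (hV : V * Vᵀ = 1) : dSOsq V V = 0 := by
  refine IsLeast.csInf_eq ⟨⟨0, by simp [IsAntisym], by rw [hV, NormedSpace.exp_zero], ?_⟩, ?_⟩
  · simp [frobSq]
  · rintro x ⟨A, -, -, rfl⟩
    exact div_nonneg (frobSq_nonneg A) zero_le_two

lemma gdist_same_rotation {p : ℕ} (k : ℝ) {V : Mat p} (hV : V * Vᵀ = 1) (D Λ : Mat p) :
    gdist k (V, D) (V, Λ) = Real.sqrt (dDsq D Λ) := by
  simp [gdist, dSOsq_self hV]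

lemma sqrt_dDsq_le_gdist {p : ℕ} {k : ℝ} (hk : 0 ≤ k) (a b : Mat p × Mat p) :
    Real.sqrt (dDsq a.2 b.2) ≤ gdist k a b :=
  Real.sqrt_le_sqrt (le_add_of_nonneg_left (mul_nonneg hk (dSOsq_nonneg _ _)))

lemma trace_eq_of_mem_Versions {p : ℕ} {Y U Λ : Mat p} (h : (U, Λ) ∈ Versions Y) :
    Λ.trace = Y.trace := by
  obtain ⟨hU, -, rfl⟩ := h
  rw [trace_mul_comm, ← Matrix.mul_assoc, mul_eq_one_comm.mp hU.1, Matrix.one_mul]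

lemma det_eq_of_mem_Versions {p : ℕ} {Y U Λ : Mat p} (h : (U, Λ) ∈ Versions Y) :
    Λ.det = Y.det := by
  obtain ⟨hU, -, rfl⟩ := h
  simp [det_mul, det_transpose, hU.2]

lemma eq_smul_one_of_mem_Versions_smul_one {p : ℕ} {c : ℝ} {U D : Mat p}
    (h : (U, D) ∈ Versions (c • (1 : Mat p))) : D = c • 1 := by
  obtain ⟨hU, -, hUD⟩ := h
  have hUU : Uᵀ * U = 1 := mul_eq_one_comm.mp hU.1
  calc D = Uᵀ * (U * D * Uᵀ) * U := by
          simp only [← Matrix.mul_assoc, hUU, Matrix.one_mul]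
          rw [Matrix.mul_assoc, hUU, Matrix.mul_one]
    _ = c • 1 := by
          rw [hUD, Matrix.mul_smul, Matrix.mul_one, Matrix.smul_mul, hUU]

lemma mem_Versions_smul_one {p : ℕ} {c : ℝ} (hc : 0 < c) {V : Mat p} (hV : IsSO V) :
    (V, c • (1 : Mat p)) ∈ Versions (c • (1 : Mat p)) := by
  refine ⟨hV, ⟨isDiag_one.smul c, fun i => by simp [hc]⟩, ?_⟩
  change V * (c • 1) * Vᵀ = c • 1
  rw [Matrix.mul_smul, Matrix.smul_mul, Matrix.mul_one, hV.1]

lemma diag_eq_or_swap_of_trace_det_eq {Λ Λ' : Mat 2} (hΛ : Λ.IsDiag) (hΛ' : Λ'.IsDiag)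
    (htr : Λ.trace = Λ'.trace) (hdet : Λ.det = Λ'.det) :
    (Λ' 0 0 = Λ 0 0 ∧ Λ' 1 1 = Λ 1 1) ∨ (Λ' 0 0 = Λ 1 1 ∧ Λ' 1 1 = Λ 0 0) := by
  rw [trace_fin_two, trace_fin_two] at htr
  rw [det_fin_two, det_fin_two, hΛ (by decide : (0 : Fin 2) ≠ 1),
    hΛ' (by decide : (0 : Fin 2) ≠ 1)] at hdet
  have key : (Λ' 0 0 - Λ 0 0) * (Λ' 0 0 - Λ 1 1) = 0 := by
    linear_combination (-Λ' 0 0) * htr + hdet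
  rcases mul_eq_zero.mp key with h | h
  · exact Or.inl ⟨by linarith, by linarith⟩
  · exact Or.inr ⟨by linarith, by linarith⟩

lemma dDsq_eq_of_mem_Versions {Y V Λ W Λ' D : Mat 2} (hVΛ : (V, Λ) ∈ Versions Y)
    (hWΛ' : (W, Λ') ∈ Versions Y) (hD : D 0 0 = D 1 1) :
    dDsq D Λ' = dDsq D Λ := by
  have htr := (trace_eq_of_mem_Versions hVΛ).trans (trace_eq_of_mem_Versions hWΛ').symm
  have hdet := (det_eq_of_mem_Versions hVΛ).trans (det_eq_of_mem_Versions hWΛ').symm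
  have hΛ : Λ.IsDiag := hVΛ.2.1.1
  have hΛ' : Λ'.IsDiag := hWΛ'.2.1.1
  simp only [dDsq, Fin.sum_univ_two]
  rcases diag_eq_or_swap_of_trace_det_eq hΛ hΛ' htr hdet with ⟨h0, h1⟩ | ⟨h0, h1⟩
  · rw [h0, h1]
  · rw [h0, h1, hD]
    ring

theorem dSR_two_by_two_isotropic_general {k : ℝ} (hk : 0 < k)
    (d₁ : ℝ) (hd₁ : 0 < d₁) (Y : Mat 2)
    (V Λ : Mat 2) (hVL : (V, Λ) ∈ Versions Y) :
    dSR k (d₁ • (1 : Mat 2)) Y = gdist k (V, d₁ • (1 : Mat 2)) (V, Λ) ∧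
    gdist k (V, d₁ • (1 : Mat 2)) (V, Λ) = Real.sqrt (dDsq (d₁ • (1 : Mat 2)) Λ) := by
  have hg := gdist_same_rotation k hVL.1.1 (d₁ • (1 : Mat 2)) Λ
  refine ⟨IsLeast.csInf_eq ⟨?_, ?_⟩, hg⟩
  · exact ⟨(V, d₁ • 1), mem_Versions_smul_one hd₁ hVL.1, (V, Λ), hVL, rfl⟩
  rintro x ⟨⟨U, D⟩, hUD, ⟨W, Λ'⟩, hWΛ', rfl⟩
  have hD : D = d₁ • 1 := eq_smul_one_of_mem_Versions_smul_one hUD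
  have hΛ' := dDsq_eq_of_mem_Versions (D := d₁ • 1) hVL hWΛ' (by simp)
  refine (sqrt_dDsq_le_gdist hk.le (U, D) (W, Λ')).trans' ?_
  rw [hg, hD, hΛ']

/-- scaling–rotation distance from an isotropic `2 × 2` SPD matrix. -/
theorem dSR_two_by_two_isotropic {k : ℝ} (hk : 0 < k)
    (d₁ : ℝ) (hd₁ : 0 < d₁) (Y : Mat 2) (hY : Y.PosDef)
    (V Λ : Mat 2) (hVL : (V, Λ) ∈ Versions Y) :
    dSR k (d₁ • (1 : Mat 2)) Y = gdist k (V, d₁ • (1 : Mat 2)) (V, Λ) ∧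
    gdist k (V, d₁ • (1 : Mat 2)) (V, Λ) = Real.sqrt (dDsq (d₁ • (1 : Mat 2)) Λ) :=
  dSR_two_by_two_isotropic_general hk d₁ hd₁ Y V Λ hVL
end
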